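/- Let ρ1 and ρ2 be n×n density matrices and let d : ℝ^n → ℝ be a Schur-convex function. Then for every n×n unitary matrix U one has d(λ(ρ1 − Uρ2U†)) ≤ d(λ(Λ↓(ρ1) − Λ↑(ρ2))), and there exists a unitary U for which equality holds; in other words, the maximum of d(λ(ρ1 − Uρ2U†)) over all unitary U equals d(λ(Λ↓(ρ1) − Λ↑(ρ2))). -/

import Mathlib

open Matrix
open scoped ComplexOrder Classical

/-- The vector of a tuple's entries sorted in decreasing (nonincreasing) order. -/
noncomputable def sortDec {n : ℕ} (x : Fin n → ℝ) : Fin n → ℝ :=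
  fun i => x (Tuple.sort x i.rev)

/-- The eigenvalues of a Hermitian matrix arranged in decreasing order,
`λ(A)`; junk value `0` if `A` is not Hermitian. -/
noncomputable def eigsDec {n : ℕ} (A : Matrix (Fin n) (Fin n) ℂ) : Fin n → ℝ :=
  if hA : A.IsHermitian then sortDec hA.eigenvalues else 0

/-- The eigenvalues of a Hermitian matrix arranged in increasing order. -/
noncomputable def eigsInc {n : ℕ} (A : Matrix (Fin n) (Fin n) ℂ) : Fin n → ℝ :=
  fun i => eigsDec A i.rev

/-- `Λ↓(A)`: the diagonal matrix of the eigenvalues of `A` in decreasing order. -/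
noncomputable def LambdaDown {n : ℕ} (A : Matrix (Fin n) (Fin n) ℂ) :
    Matrix (Fin n) (Fin n) ℂ :=
  Matrix.diagonal fun i => (eigsDec A i : ℂ)

/-- `Λ↑(A)`: the diagonal matrix of the eigenvalues of `A` in increasing order. -/
noncomputable def LambdaUp {n : ℕ} (A : Matrix (Fin n) (Fin n) ℂ) :
    Matrix (Fin n) (Fin n) ℂ :=
  Matrix.diagonal fun i => (eigsInc A i : ℂ)

/-- `x ≺ y`: the sum of the `k` largest entries of `x` is at most that of `y`
for every `k`, with equality of the total sums. -/
def Majorizes {n : ℕ} (x y : Fin n → ℝ) : Prop :=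
  (∀ k : ℕ, ∑ i ∈ Finset.univ.filter (fun i : Fin n => (i : ℕ) < k), sortDec x i ≤
      ∑ i ∈ Finset.univ.filter (fun i : Fin n => (i : ℕ) < k), sortDec y i) ∧
    (∑ i, x i) = ∑ i, y i

/-- A function `d` is Schur-convex if `x ≺ y` implies `d x ≤ d y`. -/
def SchurConvex {n : ℕ} (d : (Fin n → ℝ) → ℝ) : Prop :=
  ∀ x y : Fin n → ℝ, Majorizes x y → d x ≤ d y

/-- A density matrix: positive semidefinite with trace one. -/
def IsDensityMatrix {n : ℕ} (ρ : Matrix (Fin n) (Fin n) ℂ) : Prop :=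
  ρ.PosSemidef ∧ ρ.trace = 1

/-- A quantum channel: completely positive trace preserving map in Kraus form. -/
def IsQuantumChannel {n : ℕ}
    (Φ : Matrix (Fin n) (Fin n) ℂ → Matrix (Fin n) (Fin n) ℂ) : Prop :=
  ∃ (r : ℕ) (F : Fin r → Matrix (Fin n) (Fin n) ℂ),
    (∑ j, (F j)ᴴ * F j) = 1 ∧ ∀ X, Φ X = ∑ j, F j * X * (F j)ᴴ

/-- A unital quantum channel. -/
def IsUnitalChannel {n : ℕ}
    (Φ : Matrix (Fin n) (Fin n) ℂ → Matrix (Fin n) (Fin n) ℂ) : Prop :=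
  IsQuantumChannel Φ ∧ Φ 1 = 1

/-- A mixed unitary channel: a convex combination of unitary conjugations. -/
def IsMixedUnitaryChannel {n : ℕ}
    (Φ : Matrix (Fin n) (Fin n) ℂ → Matrix (Fin n) (Fin n) ℂ) : Prop :=
  ∃ (r : ℕ) (t : Fin r → ℝ) (U : Fin r → Matrix (Fin n) (Fin n) ℂ),
    (∀ j, 0 ≤ t j) ∧ (∑ j, t j) = 1 ∧
      (∀ j, U j ∈ Matrix.unitaryGroup (Fin n) ℂ) ∧
      ∀ X, Φ X = ∑ j, (t j : ℂ) • (U j * X * (U j)ᴴ)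

/-- Functional calculus: `f(A)` for a Hermitian matrix `A`, via the spectral theorem;
junk value `0` if `A` is not Hermitian. -/
noncomputable def matFun {n : ℕ} (f : ℝ → ℝ) (A : Matrix (Fin n) (Fin n) ℂ) :
    Matrix (Fin n) (Fin n) ℂ :=
  if hA : A.IsHermitian then
    (hA.eigenvectorUnitary : Matrix (Fin n) (Fin n) ℂ) *
      Matrix.diagonal (fun i => (f (hA.eigenvalues i) : ℂ)) *
      (hA.eigenvectorUnitary : Matrix (Fin n) (Fin n) ℂ)ᴴ
  else 0

/-- The PSD square root, as `Matrix.PosSemidef.sqrt` was defined in Mathlib (Dec 2024). -/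
noncomputable def oldPSDSqrt {n : ℕ} {A : Matrix (Fin n) (Fin n) ℂ} (hA : A.PosSemidef) :
    Matrix (Fin n) (Fin n) ℂ :=
  hA.1.eigenvectorUnitary.1 * Matrix.diagonal ((↑) ∘ (Real.sqrt ·) ∘ hA.1.eigenvalues) *
    (star hA.1.eigenvectorUnitary : Matrix (Fin n) (Fin n) ℂ)

/-- `|A| = (AᴴA)^{1/2}`. -/
noncomputable def matAbs {n : ℕ} (A : Matrix (Fin n) (Fin n) ℂ) :
    Matrix (Fin n) (Fin n) ℂ :=
  oldPSDSqrt (Matrix.posSemidef_conjTranspose_mul_self A)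

/-- `tr|A|`, the sum of the singular values of `A`. -/
noncomputable def traceAbs {n : ℕ} (A : Matrix (Fin n) (Fin n) ℂ) : ℝ :=
  ((matAbs A).trace).re

/-- The singular values of `A` in decreasing order. -/
noncomputable def singVals {n : ℕ} (A : Matrix (Fin n) (Fin n) ℂ) : Fin n → ℝ :=
  eigsDec (matAbs A)

/-- The positive semidefinite square root of a PSD matrix (junk value `0` otherwise). -/
noncomputable def matSqrt {n : ℕ} (A : Matrix (Fin n) (Fin n) ℂ) :
    Matrix (Fin n) (Fin n) ℂ :=
  if hA : A.PosSemidef then oldPSDSqrt hA else 0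

/-- The fidelity `F(ρ,σ) = tr|ρ^{1/2} σ^{1/2}|`. -/
noncomputable def fidelity {n : ℕ} (ρ σ : Matrix (Fin n) (Fin n) ℂ) : ℝ :=
  traceAbs (matSqrt ρ * matSqrt σ)

/-- The relative entropy `S(ρ‖σ) = tr(ρ (log ρ - log σ))`. -/
noncomputable def relEntropy {n : ℕ} (ρ σ : Matrix (Fin n) (Fin n) ℂ) : ℝ :=
  ((ρ * (matFun Real.log ρ - matFun Real.log σ)).trace).re

/-- The (real) trace of a matrix whose trace is real. -/
noncomputable def trR {n : ℕ} (A : Matrix (Fin n) (Fin n) ℂ) : ℝ := A.trace.re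

/-!
Ky Fan's maximum principle: for Hermitian `B`, unitary `W` and `#S = k`,
the real part of `∑ j ∈ S, (Wᴴ B W) j j` equals `∑ a, c a * λ_a(B)`, where `c` (column sums over
`S` of the doubly stochastic matrix `|Wᴴ V|²`, `V` an eigenbasis of `B`) lies in the hypersimplex
`{c ∈ [0,1]ⁿ | ∑ c = k}`; hence it lies between the sums of the `k` smallest and of the `k` largest
eigenvalues of `B`. Evaluating the `k` largest eigenvalues of `C = ρ1 - U ρ2 Uᴴ` in an eigenbasis
of `C` splits them into such diagonal sums for `ρ1` and for `ρ2`, so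
`λ(C) ≺ λ↓(ρ1) - λ↑(ρ2)` (the traces agree), and Schur-convexity gives the inequality. Equality
holds for the unitary carrying the eigenbasis of `ρ2`, in increasing order, to that of `ρ1`, in
decreasing order: then `ρ1 - U ρ2 Uᴴ` is unitarily similar to `Λ↓(ρ1) - Λ↑(ρ2)`.
-/

open Finset

section Sorting

variable {n : ℕ}

theorem antitone_sortDec (x : Fin n → ℝ) : Antitone (sortDec x) :=
  fun _ _ hij => Tuple.monotone_sort x (Fin.rev_le_rev.mpr hij)

theorem sortDec_eq_comp_perm (x : Fin n → ℝ) :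
    sortDec x = x ∘ (Fin.revPerm.trans (Tuple.sort x)) := rfl

theorem sortDec_eq_of_antitone {x : Fin n → ℝ} {σ : Equiv.Perm (Fin n)}
    (h : Antitone (x ∘ σ)) : sortDec x = x ∘ σ :=
  Tuple.unique_antitone (σ := Fin.revPerm.trans (Tuple.sort x)) (antitone_sortDec x) h

theorem sortDec_eq_of_map_eq {x y : Fin n → ℝ} (h : univ.val.map x = univ.val.map y) :
    sortDec x = sortDec y := by
  refine List.ofFn_injective (List.Perm.eq_of_pairwise' (antitone_sortDec x).sortedGE_ofFn.pairwise
    (antitone_sortDec y).sortedGE_ofFn.pairwise ?_)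
  rw [sortDec_eq_comp_perm x, sortDec_eq_comp_perm y]
  refine ((Equiv.Perm.ofFn_comp_perm _ x).trans ?_).trans (Equiv.Perm.ofFn_comp_perm _ y).symm
  rwa [Fin.univ_val_map, Fin.univ_val_map, Multiset.coe_eq_coe] at h

theorem sortDec_neg (x : Fin n → ℝ) : sortDec (-x) = fun i => -sortDec x i.rev := by
  have hanti : Antitone ((-x) ∘ (Fin.revPerm.trans (Fin.revPerm.trans (Tuple.sort x)))) :=
    fun i j hij => neg_le_neg (antitone_sortDec x (Fin.rev_le_rev.mpr hij))
  rw [sortDec_eq_of_antitone hanti]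
  rfl

theorem sortDec_sortDec (x : Fin n → ℝ) : sortDec (sortDec x) = sortDec x :=
  sortDec_eq_of_antitone (σ := Equiv.refl _) (antitone_sortDec x)

theorem sum_sortDec (x : Fin n → ℝ) : ∑ i, sortDec x i = ∑ i, x i :=
  Equiv.sum_comp (Fin.revPerm.trans (Tuple.sort x)) x

end Sorting

section PrefixSums

variable {n : ℕ}

def prefixSum (k : ℕ) (x : Fin n → ℝ) : ℝ :=
  ∑ i ∈ univ.filter (fun i : Fin n => (i : ℕ) < k), x i

def hypersimplex (n k : ℕ) : Set (Fin n → ℝ) :=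
  {c | (∀ i, c i ∈ Set.Icc 0 1) ∧ ∑ i, c i = k}

def prefixIndicator (k : ℕ) : Fin n → ℝ := fun i => if (i : ℕ) < k then 1 else 0

theorem prefixSum_eq_sum_mul (k : ℕ) (x : Fin n → ℝ) :
    prefixSum k x = ∑ i, prefixIndicator k i * x i := by
  simp only [prefixSum, prefixIndicator, ite_mul, one_mul, zero_mul, sum_ite, sum_const_zero,
    add_zero]

theorem prefixSum_of_le {k : ℕ} (hk : n ≤ k) (x : Fin n → ℝ) : prefixSum k x = ∑ i, x i :=
  sum_congr (filter_true_of_mem fun i _ => i.isLt.trans_le hk) fun _ _ => rfl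

theorem prefixIndicator_mem_hypersimplex {k : ℕ} (hk : k ≤ n) :
    prefixIndicator k ∈ hypersimplex n k := by
  refine ⟨fun i => by unfold prefixIndicator; split_ifs <;> simp, ?_⟩
  simp only [prefixIndicator, sum_boole, Fin.card_filter_val_lt, min_eq_right hk]

theorem le_of_mem_hypersimplex {k : ℕ} {c : Fin n → ℝ} (hc : c ∈ hypersimplex n k) : k ≤ n := by
  have : (k : ℝ) ≤ n := by
    calc (k : ℝ) = ∑ i, c i := hc.2.symm
      _ ≤ ∑ _i : Fin n, 1 := sum_le_sum fun i _ => (hc.1 i).2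
      _ = n := by simp
  exact_mod_cast this

theorem comp_perm_mem_hypersimplex {k : ℕ} {c : Fin n → ℝ} (hc : c ∈ hypersimplex n k)
    (σ : Equiv.Perm (Fin n)) : c ∘ σ ∈ hypersimplex n k :=
  ⟨fun i => hc.1 (σ i), (Equiv.sum_comp σ c).trans hc.2⟩

theorem sum_mul_le_prefixSum_of_antitone {k : ℕ} {s c : Fin n → ℝ} (hs : Antitone s)
    (hc : c ∈ hypersimplex n k) : ∑ i, c i * s i ≤ prefixSum k s := by
  have hk := le_of_mem_hypersimplex hc
  -- `∑ (prefixIndicator k - c) = 0`, so the threshold `t` can be subtracted from every `s i`.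
  obtain ⟨t, hhead, htail⟩ : ∃ t, (∀ i : Fin n, (i : ℕ) < k → t ≤ s i) ∧
      ∀ i : Fin n, k ≤ (i : ℕ) → s i ≤ t := by
    rcases hk.lt_or_eq with hlt | rfl
    · exact ⟨s ⟨k, hlt⟩, fun i hi => hs (Fin.mk_le_mk.mpr hi.le), fun i hi => hs hi⟩
    · obtain ⟨t, ht⟩ := (Set.finite_range s).bddBelow
      exact ⟨t, fun i _ => ht ⟨i, rfl⟩, fun i hi => absurd i.isLt (not_lt.mpr hi)⟩
  have hmass : ∑ i, (prefixIndicator k i - c i) = 0 := by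
    rw [sum_sub_distrib, (prefixIndicator_mem_hypersimplex hk).2, hc.2, sub_self]
  rw [prefixSum_eq_sum_mul, ← sub_nonneg, ← sum_sub_distrib]
  calc 0 = ∑ i, (prefixIndicator k i - c i) * t := by rw [← sum_mul, hmass, zero_mul]
    _ ≤ ∑ i, (prefixIndicator k i * s i - c i * s i) := sum_le_sum fun i _ => ?_
  obtain ⟨hc0, hc1⟩ := hc.1 i
  by_cases hi : (i : ℕ) < k
  · simp only [prefixIndicator, if_pos hi]
    nlinarith [hhead i hi]
  · simp only [prefixIndicator, if_neg hi]
    nlinarith [htail i (not_lt.mp hi)]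

theorem sum_mul_le_prefixSum_sortDec {k : ℕ} {c : Fin n → ℝ} (hc : c ∈ hypersimplex n k)
    (x : Fin n → ℝ) : ∑ i, c i * x i ≤ prefixSum k (sortDec x) := by
  set σ := Fin.revPerm.trans (Tuple.sort x)
  calc ∑ i, c i * x i = ∑ i, c (σ i) * sortDec x i := (Equiv.sum_comp σ (fun i => c i * x i)).symm
    _ ≤ _ := sum_mul_le_prefixSum_of_antitone (antitone_sortDec x) (comp_perm_mem_hypersimplex hc σ)

theorem prefixSum_sortDec_rev_le_sum_mul {k : ℕ} {c : Fin n → ℝ} (hc : c ∈ hypersimplex n k)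
    (x : Fin n → ℝ) : prefixSum k (fun i => sortDec x i.rev) ≤ ∑ i, c i * x i := by
  have := sum_mul_le_prefixSum_sortDec hc (-x)
  simp only [sortDec_neg, prefixSum, Pi.neg_apply, mul_neg, sum_neg_distrib] at this ⊢
  linarith

theorem prefixSum_le_prefixSum_sortDec {k : ℕ} (hk : k ≤ n) (x : Fin n → ℝ) :
    prefixSum k x ≤ prefixSum k (sortDec x) :=
  (prefixSum_eq_sum_mul k x).trans_le
    (sum_mul_le_prefixSum_sortDec (prefixIndicator_mem_hypersimplex hk) x)

theorem majorizes_of_prefixSum_le {x y : Fin n → ℝ}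
    (hle : ∀ k ≤ n, prefixSum k (sortDec x) ≤ prefixSum k (sortDec y))
    (hsum : ∑ i, x i = ∑ i, y i) : Majorizes x y := by
  refine ⟨fun k => ?_, hsum⟩
  rcases le_total k n with hk | hk
  · exact hle k hk
  · change prefixSum k (sortDec x) ≤ prefixSum k (sortDec y)
    rw [prefixSum_of_le hk, prefixSum_of_le hk, sum_sortDec, sum_sortDec, hsum]

end PrefixSums

section Spectrum

variable {n : ℕ} {A B : Matrix (Fin n) (Fin n) ℂ}

theorem eigsDec_of_isHermitian (hA : A.IsHermitian) : eigsDec A = sortDec hA.eigenvalues :=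
  dif_pos hA

theorem sum_eigsDec (hA : A.IsHermitian) : ∑ i, eigsDec A i = A.trace.re := by
  simp [eigsDec_of_isHermitian hA, sum_sortDec, hA.trace_eq_sum_eigenvalues]

theorem sum_eigsInc (A : Matrix (Fin n) (Fin n) ℂ) : ∑ i, eigsInc A i = ∑ i, eigsDec A i :=
  Equiv.sum_comp Fin.revPerm (eigsDec A)

theorem trace_unitary_conj {U : Matrix (Fin n) (Fin n) ℂ} (hU : U ∈ unitaryGroup (Fin n) ℂ)
    (A : Matrix (Fin n) (Fin n) ℂ) : (U * A * Uᴴ).trace = A.trace := by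
  rw [trace_mul_cycle, ← star_eq_conjTranspose, mem_unitaryGroup_iff'.mp hU, Matrix.one_mul]

theorem eigsDec_unitary_conj (hA : A.IsHermitian) {U : Matrix (Fin n) (Fin n) ℂ}
    (hU : U ∈ unitaryGroup (Fin n) ℂ) : eigsDec (U * A * Uᴴ) = eigsDec A := by
  have hUA := isHermitian_mul_mul_conjTranspose U hA
  rw [eigsDec_of_isHermitian hUA, eigsDec_of_isHermitian hA,
    (hUA.eigenvalues_eq_eigenvalues_iff hA).mpr]
  rw [charpoly_mul_comm, ← Matrix.mul_assoc, ← star_eq_conjTranspose,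
    mem_unitaryGroup_iff'.mp hU, Matrix.one_mul]

theorem eigsDec_diagonal (w : Fin n → ℝ) :
    eigsDec (diagonal fun i => (w i : ℂ)) = sortDec w := by
  have hD : (diagonal fun i => (w i : ℂ)).IsHermitian :=
    isHermitian_diagonal_iff.mpr fun i => Complex.conj_ofReal (w i)
  rw [eigsDec_of_isHermitian hD]
  apply sortDec_eq_of_map_eq
  have hroots := hD.roots_charpoly_eq_eigenvalues
  rw [charpoly_diagonal, Polynomial.roots_prod _ _ (Polynomial.monic_prod_of_monic _ _
    fun i _ => Polynomial.monic_X_sub_C _).ne_zero] at hroots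
  simp only [Polynomial.roots_X_sub_C, Multiset.bind_singleton] at hroots
  refine Multiset.map_injective Complex.ofReal_injective ?_
  rw [Multiset.map_map, Multiset.map_map]
  exact hroots.symm

theorem lambdaDown_sub_lambdaUp (A B : Matrix (Fin n) (Fin n) ℂ) :
    LambdaDown A - LambdaUp B = diagonal fun i => ((eigsDec A - eigsInc B) i : ℂ) := by
  rw [LambdaDown, LambdaUp, diagonal_sub]
  simp

theorem isHermitian_lambdaDown_sub_lambdaUp (A B : Matrix (Fin n) (Fin n) ℂ) :
    (LambdaDown A - LambdaUp B).IsHermitian := by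
  rw [lambdaDown_sub_lambdaUp]
  exact isHermitian_diagonal_iff.mpr fun i => Complex.conj_ofReal _

theorem eigsDec_lambdaDown_sub_lambdaUp (A B : Matrix (Fin n) (Fin n) ℂ) :
    eigsDec (LambdaDown A - LambdaUp B) = sortDec (eigsDec A - eigsInc B) := by
  rw [lambdaDown_sub_lambdaUp, eigsDec_diagonal]

end Spectrum

section Diagonalization

variable {n : ℕ} {A : Matrix (Fin n) (Fin n) ℂ}

theorem permMatrix_mem_unitaryGroup (σ : Equiv.Perm (Fin n)) :
    σ.permMatrix ℂ ∈ unitaryGroup (Fin n) ℂ := by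
  rw [mem_unitaryGroup_iff', star_eq_conjTranspose, conjTranspose_permMatrix, ← permMatrix_mul,
    mul_inv_cancel, permMatrix_one]

theorem permMatrix_mul_diagonal_mul_conjTranspose (σ : Equiv.Perm (Fin n)) (v : Fin n → ℂ) :
    σ.permMatrix ℂ * diagonal v * (σ.permMatrix ℂ)ᴴ = diagonal (v ∘ σ) := by
  rw [conjTranspose_permMatrix, Equiv.Perm.permMatrix, Equiv.Perm.permMatrix,
    PEquiv.toMatrix_toPEquiv_mul, PEquiv.mul_toMatrix_toPEquiv, submatrix_submatrix]
  exact submatrix_diagonal_equiv v σ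

theorem Matrix.IsHermitian.exists_unitary_eq_conj_diagonal_comp (hA : A.IsHermitian)
    (σ : Equiv.Perm (Fin n)) :
    ∃ W ∈ unitaryGroup (Fin n) ℂ,
      A = W * diagonal (fun i => (hA.eigenvalues (σ i) : ℂ)) * Wᴴ := by
  set V : Matrix (Fin n) (Fin n) ℂ := (hA.eigenvectorUnitary : Matrix (Fin n) (Fin n) ℂ)
  set P := σ⁻¹.permMatrix ℂ
  refine ⟨V * P, mul_mem hA.eigenvectorUnitary.2 (permMatrix_mem_unitaryGroup _), ?_⟩
  have hdiag : P * diagonal (fun i => (hA.eigenvalues (σ i) : ℂ)) * Pᴴ =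
      diagonal (RCLike.ofReal ∘ hA.eigenvalues) := by
    rw [permMatrix_mul_diagonal_mul_conjTranspose]
    congr 1
    ext i
    simp
  conv_lhs => rw [hA.spectral_theorem, Unitary.conjStarAlgAut_apply, ← hdiag]
  simp only [conjTranspose_mul, star_eq_conjTranspose, Matrix.mul_assoc, V]

theorem Matrix.IsHermitian.exists_unitary_eq_conj_lambdaDown (hA : A.IsHermitian) :
    ∃ W ∈ unitaryGroup (Fin n) ℂ, A = W * LambdaDown A * Wᴴ := by
  rw [LambdaDown, eigsDec_of_isHermitian hA]
  exact hA.exists_unitary_eq_conj_diagonal_comp (Fin.revPerm.trans (Tuple.sort _))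

theorem Matrix.IsHermitian.exists_unitary_eq_conj_lambdaUp (hA : A.IsHermitian) :
    ∃ W ∈ unitaryGroup (Fin n) ℂ, A = W * LambdaUp A * Wᴴ := by
  simp only [LambdaUp, eigsInc, eigsDec_of_isHermitian hA]
  exact hA.exists_unitary_eq_conj_diagonal_comp
    (Fin.revPerm.trans (Fin.revPerm.trans (Tuple.sort _)))

end Diagonalization

section KyFan

variable {n : ℕ} {B W : Matrix (Fin n) (Fin n) ℂ}

theorem re_diag_mul_diagonal_mul_conjTranspose (Q : Matrix (Fin n) (Fin n) ℂ) (μ : Fin n → ℝ)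
    (j : Fin n) :
    ((Q * diagonal (fun a => (μ a : ℂ)) * Qᴴ) j j).re = ∑ a, Complex.normSq (Q j a) * μ a := by
  rw [mul_apply, Complex.re_sum]
  refine sum_congr rfl fun a _ => ?_
  rw [mul_diagonal, conjTranspose_apply, mul_right_comm, Complex.star_def, Complex.mul_conj,
    ← Complex.ofReal_mul, Complex.ofReal_re]

theorem normSq_mem_doublyStochastic {Q : Matrix (Fin n) (Fin n) ℂ}
    (hQ : Q ∈ unitaryGroup (Fin n) ℂ) : Q.map Complex.normSq ∈ doublyStochastic ℝ (Fin n) := by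
  rw [mem_doublyStochastic_iff_sum]
  refine ⟨fun i j => Complex.normSq_nonneg _, fun i => ?_, fun j => ?_⟩
  · have h := congrArg Complex.re (congrFun₂ (mem_unitaryGroup_iff.mp hQ) i i)
    simpa [mul_apply, Complex.mul_conj] using h
  · have h := congrArg Complex.re (congrFun₂ (mem_unitaryGroup_iff'.mp hQ) j j)
    simpa [mul_apply, Complex.conj_mul', ← Complex.ofReal_pow, Complex.sq_norm] using h

theorem sum_rows_mem_hypersimplex {M : Matrix (Fin n) (Fin n) ℝ}
    (hM : M ∈ doublyStochastic ℝ (Fin n)) (S : Finset (Fin n)) :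
    (fun a => ∑ j ∈ S, M j a) ∈ hypersimplex n #S := by
  refine ⟨fun a => ⟨sum_nonneg fun j _ => nonneg_of_mem_doublyStochastic hM, ?_⟩, ?_⟩
  · calc ∑ j ∈ S, M j a ≤ ∑ j, M j a :=
          sum_le_sum_of_subset_of_nonneg (subset_univ S) fun _ _ _ =>
            nonneg_of_mem_doublyStochastic hM
      _ = 1 := sum_col_of_mem_doublyStochastic hM a
  · rw [sum_comm]
    simp [sum_row_of_mem_doublyStochastic hM]

theorem Matrix.IsHermitian.exists_sum_re_diag_conj_eq (hB : B.IsHermitian)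
    (hW : W ∈ unitaryGroup (Fin n) ℂ) (S : Finset (Fin n)) :
    ∃ c ∈ hypersimplex n #S, ∑ j ∈ S, ((Wᴴ * B * W) j j).re = ∑ a, c a * hB.eigenvalues a := by
  set Q := Wᴴ * (hB.eigenvectorUnitary : Matrix (Fin n) (Fin n) ℂ)
  have hQ : Q ∈ unitaryGroup (Fin n) ℂ := mul_mem (Unitary.star_mem hW) hB.eigenvectorUnitary.2
  refine ⟨fun a => ∑ j ∈ S, Q.map Complex.normSq j a,
    sum_rows_mem_hypersimplex (normSq_mem_doublyStochastic hQ) S, ?_⟩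
  have hconj : Wᴴ * B * W = Q * diagonal (fun a => (hB.eigenvalues a : ℂ)) * Qᴴ := by
    conv_lhs => rw [hB.spectral_theorem, Unitary.conjStarAlgAut_apply]
    simp only [Q, conjTranspose_mul, conjTranspose_conjTranspose, star_eq_conjTranspose,
      Matrix.mul_assoc]
    rfl
  simp only [hconj, re_diag_mul_diagonal_mul_conjTranspose, map_apply, sum_mul]
  exact sum_comm

theorem Matrix.IsHermitian.sum_re_diag_conj_le_prefixSum (hB : B.IsHermitian)
    (hW : W ∈ unitaryGroup (Fin n) ℂ) (S : Finset (Fin n)) :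
    ∑ j ∈ S, ((Wᴴ * B * W) j j).re ≤ prefixSum #S (eigsDec B) := by
  obtain ⟨c, hc, h⟩ := hB.exists_sum_re_diag_conj_eq hW S
  rw [h, eigsDec_of_isHermitian hB]
  exact sum_mul_le_prefixSum_sortDec hc _

theorem Matrix.IsHermitian.prefixSum_le_sum_re_diag_conj (hB : B.IsHermitian)
    (hW : W ∈ unitaryGroup (Fin n) ℂ) (S : Finset (Fin n)) :
    prefixSum #S (eigsInc B) ≤ ∑ j ∈ S, ((Wᴴ * B * W) j j).re := by
  obtain ⟨c, hc, h⟩ := hB.exists_sum_re_diag_conj_eq hW S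
  rw [h, show eigsInc B = fun i => eigsDec B i.rev from rfl, eigsDec_of_isHermitian hB]
  exact prefixSum_sortDec_rev_le_sum_mul hc _

theorem exists_prefixSum_sortDec_eq_sum {k : ℕ} (hk : k ≤ n) (x : Fin n → ℝ) :
    ∃ S : Finset (Fin n), #S = k ∧ prefixSum k (sortDec x) = ∑ j ∈ S, x j := by
  refine ⟨(univ.filter fun i : Fin n => (i : ℕ) < k).map
    (Fin.revPerm.trans (Tuple.sort x)).toEmbedding, ?_, ?_⟩
  · rw [card_map, Fin.card_filter_val_lt, min_eq_right hk]
  · rw [sum_map]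
    rfl

theorem Matrix.IsHermitian.re_diag_conj_eigenvectorUnitary (hB : B.IsHermitian) (j : Fin n) :
    (((hB.eigenvectorUnitary : Matrix (Fin n) (Fin n) ℂ)ᴴ * B *
      hB.eigenvectorUnitary) j j).re = hB.eigenvalues j := by
  have h := hB.conjStarAlgAut_star_eigenvectorUnitary
  rw [Unitary.conjStarAlgAut_star_apply] at h
  rw [← star_eq_conjTranspose, h]
  simp

end KyFan

section Main

variable {n : ℕ} {A B : Matrix (Fin n) (Fin n) ℂ}

theorem majorizes_eigsDec_sub_unitary_conj (hA : A.IsHermitian) (hB : B.IsHermitian)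
    {U : Matrix (Fin n) (Fin n) ℂ} (hU : U ∈ unitaryGroup (Fin n) ℂ) :
    Majorizes (eigsDec (A - U * B * Uᴴ)) (eigsDec (LambdaDown A - LambdaUp B)) := by
  have hC : (A - U * B * Uᴴ).IsHermitian := hA.sub (isHermitian_mul_mul_conjTranspose U hB)
  rw [eigsDec_lambdaDown_sub_lambdaUp]
  refine majorizes_of_prefixSum_le (fun k hk => ?_) ?_
  · obtain ⟨V, hV, hdiag⟩ : ∃ V ∈ unitaryGroup (Fin n) ℂ,
        ∀ j, ((Vᴴ * (A - U * B * Uᴴ) * V) j j).re = hC.eigenvalues j :=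
      ⟨_, hC.eigenvectorUnitary.2, hC.re_diag_conj_eigenvectorUnitary⟩
    have hsplit : ∀ j, ((Vᴴ * (A - U * B * Uᴴ) * V) j j).re =
        ((Vᴴ * A * V) j j).re - (((Uᴴ * V)ᴴ * B * (Uᴴ * V)) j j).re := fun j => by
      rw [Matrix.mul_sub, Matrix.sub_mul, Matrix.sub_apply, Complex.sub_re]
      simp only [conjTranspose_mul, conjTranspose_conjTranspose, Matrix.mul_assoc]
    obtain ⟨S, hS, hsum⟩ := exists_prefixSum_sortDec_eq_sum hk hC.eigenvalues
    rw [eigsDec_of_isHermitian hC, sortDec_sortDec, sortDec_sortDec, hsum]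
    calc ∑ j ∈ S, hC.eigenvalues j
        = ∑ j ∈ S, ((Vᴴ * A * V) j j).re - ∑ j ∈ S, (((Uᴴ * V)ᴴ * B * (Uᴴ * V)) j j).re := by
          rw [← sum_sub_distrib]
          exact sum_congr rfl fun j _ => (hdiag j).symm.trans (hsplit j)
      _ ≤ prefixSum k (eigsDec A) - prefixSum k (eigsInc B) := by
          rw [← hS]
          exact sub_le_sub (hA.sum_re_diag_conj_le_prefixSum hV S)
            (hB.prefixSum_le_sum_re_diag_conj (mul_mem (Unitary.star_mem hU) hV) S)
      _ = prefixSum k (eigsDec A - eigsInc B) := by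
          simp only [prefixSum, Pi.sub_apply, sum_sub_distrib]
      _ ≤ prefixSum k (sortDec (eigsDec A - eigsInc B)) := prefixSum_le_prefixSum_sortDec hk _
  · rw [sum_sortDec, sum_eigsDec hC, Pi.sub_def, sum_sub_distrib, sum_eigsInc, sum_eigsDec hA,
      sum_eigsDec hB, trace_sub, trace_unitary_conj hU, Complex.sub_re]

theorem exists_unitary_eigsDec_sub_conj_eq (hA : A.IsHermitian) (hB : B.IsHermitian) :
    ∃ U ∈ unitaryGroup (Fin n) ℂ,
      eigsDec (A - U * B * Uᴴ) = eigsDec (LambdaDown A - LambdaUp B) := by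
  obtain ⟨W₁, hW₁, hA'⟩ := hA.exists_unitary_eq_conj_lambdaDown
  obtain ⟨W₂, hW₂, hB'⟩ := hB.exists_unitary_eq_conj_lambdaUp
  refine ⟨W₁ * W₂ᴴ, mul_mem hW₁ (Unitary.star_mem hW₂), ?_⟩
  have hW₂' : W₂ᴴ * W₂ = 1 := mem_unitaryGroup_iff'.mp hW₂
  have hconj : A - W₁ * W₂ᴴ * B * (W₁ * W₂ᴴ)ᴴ = W₁ * (LambdaDown A - LambdaUp B) * W₁ᴴ := by
    conv_lhs => rw [hA', hB']
    simp only [conjTranspose_mul, conjTranspose_conjTranspose, Matrix.mul_sub, Matrix.sub_mul,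
      Matrix.mul_assoc]
    rw [← Matrix.mul_assoc W₂ᴴ W₂, hW₂', Matrix.one_mul, ← Matrix.mul_assoc W₂ᴴ W₂, hW₂',
      Matrix.one_mul]
  rw [hconj, eigsDec_unitary_conj (isHermitian_lambdaDown_sub_lambdaUp A B) hW₁]

end Main

/-- For density matrices `ρ1, ρ2` and a Schur-convex `d`, the maximum of
`d(λ(ρ1 - U ρ2 Uᴴ))` over unitary `U` equals `d(λ(Λ↓(ρ1) - Λ↑(ρ2)))`. -/
theorem stmt_0 {n : ℕ} (ρ1 ρ2 : Matrix (Fin n) (Fin n) ℂ)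
    (h1 : IsDensityMatrix ρ1) (h2 : IsDensityMatrix ρ2)
    (d : (Fin n → ℝ) → ℝ) (hd : SchurConvex d) :
    (∀ U ∈ Matrix.unitaryGroup (Fin n) ℂ,
        d (eigsDec (ρ1 - U * ρ2 * Uᴴ)) ≤ d (eigsDec (LambdaDown ρ1 - LambdaUp ρ2))) ∧
      ∃ U ∈ Matrix.unitaryGroup (Fin n) ℂ,
        d (eigsDec (ρ1 - U * ρ2 * Uᴴ)) = d (eigsDec (LambdaDown ρ1 - LambdaUp ρ2)) := by
  have hρ1 : ρ1.IsHermitian := h1.1.1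
  have hρ2 : ρ2.IsHermitian := h2.1.1
  refine ⟨fun U hU => hd _ _ (majorizes_eigsDec_sub_unitary_conj hρ1 hρ2 hU), ?_⟩
  obtain ⟨U, hU, heq⟩ := exists_unitary_eigsDec_sub_conj_eq hρ1 hρ2
  exact ⟨U, hU, congrArg d heq⟩
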